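/- Let d, n be positive integers, let U_K, U_Q ⊂ ℝ^{d×n} be compact, let f : U_K × U_Q → ℝ^{d×n} be continuous, and let ε > 0. Then there exist two sum-of-linear-transformations layers Linear_K, Linear_Q and a single-head cross-attention layer Attn with weight matrices W_K, W_Q, W_V, W_O of suitable dimensions such that for all Z_K ∈ U_K and Z_Q ∈ U_Q: ‖W_V·Linear_K(Z_K) · Softmax((W_K·Linear_K(Z_K))ᵀ · W_Q·Linear_Q(Z_Q)) · W_O − f(Z_K, Z_Q)‖_∞ ≤ ε. -/

import Mathlib

/-!
Cover the compact set `U_K × U_Q` by finitely many points `z p = (K_p, Q_p)` and let the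
attention positions be the pairs `(p, γ)` of a net point and a column. In output column `c` the
score of position `(p, γ)` is `-λ (‖Z_K - K_p‖² + ‖Z_Q - Q_p‖² + b [γ ≠ c])`, up to a term that
does not depend on the position; such scores are realizable because `‖Z - K‖²` is affine in `Z`
apart from `‖Z‖²`. The value at `(p, γ)` is column `γ` of `f (z p)`. For large `λ` the softmax
puts almost all of its weight on positions with `γ = c` whose net point is close to `(Z_K, Z_Q)`,
where `f` is `ε/2`-close to `f Z_K Z_Q` by uniform continuity; the other positions carry total
weight `O(e^{-λ b / 2})`.
-/

open Matrix

/-- Column-wise softmax of a real matrix. -/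
noncomputable def softmax {a b : ℕ} (M : Matrix (Fin a) (Fin b) ℝ) :
    Matrix (Fin a) (Fin b) ℝ :=
  Matrix.of fun i j => Real.exp (M i j) / ∑ k, Real.exp (M k j)

open Real Filter Topology

section SoftmaxConcentration

variable {ι : Type*} [Fintype ι]

theorem sum_exp_div_sum_exp [Nonempty ι] (t : ι → ℝ) :
    ∑ w, exp (t w) / ∑ u, exp (t u) = 1 := by
  rw [← Finset.sum_div, div_self (Finset.sum_pos (fun _ _ => exp_pos _) Finset.univ_nonempty).ne']

theorem exp_div_sum_exp_le_exp_sub (t : ι → ℝ) (w w₀ : ι) :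
    exp (t w) / ∑ u, exp (t u) ≤ exp (t w - t w₀) := by
  rw [exp_sub]
  exact div_le_div_of_nonneg_left (exp_pos _).le (exp_pos _)
    (Finset.single_le_sum (fun u _ => (exp_pos (t u)).le) (Finset.mem_univ w₀))

theorem abs_sum_mul_softmax_sub_le (t v : ι → ℝ) {y η B Δ : ℝ} (w₀ : ι) (hη : 0 ≤ η)
    (hgood : ∀ w, t w₀ - Δ < t w → |v w - y| ≤ η) (hB : ∀ w, |v w - y| ≤ B) :
    |∑ w, v w * (exp (t w) / ∑ u, exp (t u)) - y| ≤
      η + Fintype.card ι * exp (-Δ) * B := by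
  have : Nonempty ι := ⟨w₀⟩
  set p : ι → ℝ := fun w => exp (t w) / ∑ u, exp (t u)
  have hp0 (w : ι) : 0 ≤ p w := by positivity
  have hp1 : ∑ w, p w = 1 := sum_exp_div_sum_exp t
  have hB0 : 0 ≤ B := (abs_nonneg _).trans (hB w₀)
  have hterm (w : ι) : |v w - y| * p w ≤ η * p w + exp (-Δ) * B := by
    by_cases hw : t w₀ - Δ < t w
    · nlinarith [hgood w hw, hp0 w, exp_pos (-Δ)]
    · have hpw : p w ≤ exp (-Δ) :=
        (exp_div_sum_exp_le_exp_sub t w w₀).trans (exp_le_exp.2 (by linarith))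
      nlinarith [mul_le_mul (hB w) hpw (hp0 w) hB0, mul_nonneg hη (hp0 w)]
  calc |∑ w, v w * p w - y| = |∑ w, (v w - y) * p w| := by
        simp only [sub_mul, Finset.sum_sub_distrib, ← Finset.mul_sum, hp1, mul_one]
    _ ≤ ∑ w, |v w - y| * p w := by
        simpa only [abs_mul, abs_of_nonneg (hp0 _)] using
          Finset.abs_sum_le_sum_abs (fun w => (v w - y) * p w) Finset.univ
    _ ≤ ∑ w, (η * p w + exp (-Δ) * B) := Finset.sum_le_sum fun w _ => hterm w
    _ = η + Fintype.card ι * exp (-Δ) * B := by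
        rw [Finset.sum_add_distrib, ← Finset.mul_sum, hp1, Finset.sum_const, nsmul_eq_mul,
          Finset.card_univ]
        ring

theorem abs_sum_mul_softmax_penalty_sub_le {X κ : Type*} [DecidableEq κ] (ρ : X → X → ℝ)
    (hρ : ∀ x y, 0 ≤ ρ x y) (g : X → κ → ℝ) (ctr : ι → X) (col : ι → κ) {x : X} {c : κ}
    {E lam b η B : ℝ} (hlam : 0 < lam) (hη : 0 ≤ η) {w₀ : ι} (hw₀ : col w₀ = c)
    (hx : ρ x (ctr w₀) ≤ b / 2) (hclose : ∀ w, ρ x (ctr w) < b → |g (ctr w) c - g x c| ≤ η)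
    (hB : ∀ w, |g (ctr w) (col w) - g x c| ≤ B) :
    |∑ w, g (ctr w) (col w) * (exp (E - lam * (ρ x (ctr w) + if col w = c then 0 else b)) /
        ∑ u, exp (E - lam * (ρ x (ctr u) + if col u = c then 0 else b))) - g x c| ≤
      η + Fintype.card ι * exp (-(lam * (b / 2))) * B := by
  refine abs_sum_mul_softmax_sub_le _ _ w₀ hη (fun w hw => ?_) hB
  rw [hw₀, if_pos rfl, add_zero] at hw
  have hpen : ρ x (ctr w) + (if col w = c then 0 else b) < b :=
    lt_of_mul_lt_mul_left (by linarith [mul_le_mul_of_nonneg_left hx hlam.le]) hlam.le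
  split_ifs at hpen with hcol
  · rw [hcol]
    exact hclose w (by simpa using hpen)
  · linarith [hρ x (ctr w)]

end SoftmaxConcentration

def sumLinear {R l m n o : Type*} [Semiring R] [Fintype m] [Fintype n] {H : ℕ}
    (P : Fin H → Matrix l m R) (Q : Fin H → Matrix n o R) (B : Matrix l o R)
    (Z : Matrix m n R) : Matrix l o R :=
  ∑ i, P i * Z * Q i + B

noncomputable def crossAttention {dA M₁ M₂ M₁' M₂' dV k : ℕ}
    (WK : Matrix (Fin dA) (Fin M₁) ℝ) (WQ : Matrix (Fin dA) (Fin M₁') ℝ)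
    (WV : Matrix (Fin dV) (Fin M₁) ℝ) (WO : Matrix (Fin M₂') (Fin k) ℝ)
    (ZK : Matrix (Fin M₁) (Fin M₂) ℝ) (ZQ : Matrix (Fin M₁') (Fin M₂') ℝ) :
    Matrix (Fin dV) (Fin k) ℝ :=
  WV * ZK * softmax ((WK * ZK)ᵀ * (WQ * ZQ)) * WO

theorem Matrix.exists_sum_mul_mul_eq_of_dotProduct {R m n p q : Type*} [CommSemiring R]
    [Fintype m] [Fintype n] [Fintype p] [DecidableEq m] [DecidableEq p]
    (C : p → q → Matrix m n R) :
    ∃ (H : ℕ) (P : Fin H → Matrix p m R) (Q : Fin H → Matrix n q R),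
      ∀ Z, ∑ h, P h * Z * Q h = of fun i j => vec (C i j) ⬝ᵥ vec Z := by
  let e := Fintype.equivFin (p × m)
  refine ⟨_, fun h => single (e.symm h).1 (e.symm h).2 1,
    fun h => of fun b j => C (e.symm h).1 j (e.symm h).2 b, fun Z => ?_⟩
  rw [e.symm.sum_comp (fun x => single x.1 x.2 (1 : R) * Z * of fun b j => C x.1 j x.2 b)]
  ext i j
  simp only [sum_apply, Fintype.sum_prod_type, Matrix.mul_assoc]
  rw [Fintype.sum_eq_single i fun i' hi' => Finset.sum_eq_zero fun a _ =>
    single_mul_apply_of_ne _ _ _ _ _ hi'.symm _]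
  simp only [single_mul_apply_same, one_mul]
  simp only [mul_apply, of_apply, dotProduct, vec, Fintype.sum_prod_type]
  rw [Finset.sum_comm]
  simp only [mul_comm]

theorem exists_crossAttention_sumLinear_eq_mul_softmax {dK nK dQ nQ dV k W : ℕ}
    (α : Fin W → Matrix (Fin dK) (Fin nK) ℝ) (α₀ : Fin W → ℝ)
    (β : Fin W → Fin k → Matrix (Fin dQ) (Fin nQ) ℝ) (β₀ : Fin W → Fin k → ℝ)
    (V : Matrix (Fin dV) (Fin W) ℝ) :
    ∃ (HK : ℕ) (PK : Fin HK → Matrix (Fin (W + 1)) (Fin dK) ℝ)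
      (QK : Fin HK → Matrix (Fin nK) (Fin W) ℝ) (RK : Matrix (Fin (W + 1)) (Fin W) ℝ)
      (HQ : ℕ) (PQ : Fin HQ → Matrix (Fin (W + 1)) (Fin dQ) ℝ)
      (QQ : Fin HQ → Matrix (Fin nQ) (Fin k) ℝ) (RQ : Matrix (Fin (W + 1)) (Fin k) ℝ)
      (WV : Matrix (Fin dV) (Fin (W + 1)) ℝ),
      ∀ ZK ZQ, crossAttention (1 : Matrix (Fin (W + 1)) (Fin (W + 1)) ℝ) 1 WV 1
          (sumLinear PK QK RK ZK) (sumLinear PQ QQ RQ ZQ) =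
        V * softmax (of fun w c =>
          vec (α w) ⬝ᵥ vec ZK + α₀ w + (vec (β w c) ⬝ᵥ vec ZQ + β₀ w c)) := by
  obtain ⟨HK, PK, QK, hK⟩ := exists_sum_mul_mul_eq_of_dotProduct
    fun (κ : Fin (W + 1)) w => Fin.cases (α w) (fun _ => 0) κ
  obtain ⟨HQ, PQ, QQ, hQ⟩ := exists_sum_mul_mul_eq_of_dotProduct
    fun (κ : Fin (W + 1)) c => Fin.cases 0 (fun w => β w c) κ
  /- Row `0` of the key layer carries the key part of the score and rows `1, …, W` form an
  identity block, so that `(W_K L_K)ᵀ (W_Q L_Q)` adds the key part to the query part stored in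
  rows `1, …, W` of the query layer, and `W_V = [0 | V]` reads `V` off the identity block. -/
  set RK : Matrix (Fin (W + 1)) (Fin W) ℝ :=
    of fun κ w => Fin.cases (α₀ w) (fun w' => (1 : Matrix _ _ ℝ) w' w) κ
  set RQ : Matrix (Fin (W + 1)) (Fin k) ℝ := of fun κ c => Fin.cases 1 (fun w => β₀ w c) κ
  refine ⟨HK, PK, QK, RK, HQ, PQ, QQ, RQ, of fun r κ => Fin.cases 0 (fun w => V r w) κ,
    fun ZK ZQ => ?_⟩
  have hLK : sumLinear PK QK RK ZK = of fun κ w =>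
      Fin.cases (vec (α w) ⬝ᵥ vec ZK + α₀ w) (fun w' => (1 : Matrix _ _ ℝ) w' w) κ := by
    ext κ w
    refine Fin.cases ?_ (fun w' => ?_) κ <;> simp [sumLinear, hK, RK]
  have hLQ : sumLinear PQ QQ RQ ZQ = of fun κ c =>
      Fin.cases 1 (fun w => vec (β w c) ⬝ᵥ vec ZQ + β₀ w c) κ := by
    ext κ c
    refine Fin.cases ?_ (fun w => ?_) κ <;> simp [sumLinear, hQ, RQ]
  simp only [crossAttention, hLK, hLQ, Matrix.one_mul, Matrix.mul_one]
  congr 2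
  · ext r w
    simp [mul_apply, Fin.sum_univ_succ, one_apply]
  · ext w c
    simp [mul_apply, Fin.sum_univ_succ, one_apply]

section SqDist

variable {m n : Type*} [Fintype m] [Fintype n]

def Matrix.sqDist (X Y : Matrix m n ℝ) : ℝ := vec (X - Y) ⬝ᵥ vec (X - Y)

theorem Matrix.sqDist_eq (X Y : Matrix m n ℝ) :
    sqDist X Y = vec X ⬝ᵥ vec X - 2 * (vec Y ⬝ᵥ vec X) + vec Y ⬝ᵥ vec Y := by
  simp only [sqDist, vec_sub, sub_dotProduct, dotProduct_sub, dotProduct_comm (vec X) (vec Y)]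
  ring

theorem Matrix.sq_sub_apply_le_sqDist (X Y : Matrix m n ℝ) (i : m) (j : n) :
    (X i j - Y i j) ^ 2 ≤ sqDist X Y := by
  rw [sq]
  exact Finset.single_le_sum (f := fun k => vec (X - Y) k * vec (X - Y) k)
    (fun _ _ => mul_self_nonneg _) (Finset.mem_univ (j, i))

theorem Matrix.sqDist_nonneg (X Y : Matrix m n ℝ) : 0 ≤ sqDist X Y :=
  Finset.sum_nonneg fun _ _ => mul_self_nonneg _

theorem Matrix.continuous_sqDist_left (Y : Matrix m n ℝ) : Continuous fun X => sqDist X Y := by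
  unfold sqDist vec
  fun_prop

end SqDist

section PairSqDist

variable {m n m' n' : Type*} [Fintype m] [Fintype n] [Fintype m'] [Fintype n']

def pairSqDist (x y : Matrix m n ℝ × Matrix m' n' ℝ) : ℝ := sqDist x.1 y.1 + sqDist x.2 y.2

theorem pairSqDist_nonneg (x y : Matrix m n ℝ × Matrix m' n' ℝ) : 0 ≤ pairSqDist x y :=
  add_nonneg (sqDist_nonneg _ _) (sqDist_nonneg _ _)

theorem setOf_pairSqDist_lt_mem_nhds (y : Matrix m n ℝ × Matrix m' n' ℝ) {a : ℝ} (ha : 0 < a) :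
    {x | pairSqDist x y < a} ∈ 𝓝 y := by
  refine IsOpen.mem_nhds (isOpen_lt ?_ continuous_const) ?_
  · exact ((continuous_sqDist_left _).comp continuous_fst).add
      ((continuous_sqDist_left _).comp continuous_snd)
  · simpa [pairSqDist, sqDist] using ha

theorem exists_crossAttention_sumLinear_eq_mul_softmax_penalty {d n d' n' dV k W : ℕ}
    (ctr : Fin W → Matrix (Fin d) (Fin n) ℝ × Matrix (Fin d') (Fin n') ℝ) (col : Fin W → Fin k)
    (V : Matrix (Fin dV) (Fin W) ℝ) (lam b : ℝ) :
    ∃ (HK : ℕ) (PK : Fin HK → Matrix (Fin (W + 1)) (Fin d) ℝ)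
      (QK : Fin HK → Matrix (Fin n) (Fin W) ℝ) (RK : Matrix (Fin (W + 1)) (Fin W) ℝ)
      (HQ : ℕ) (PQ : Fin HQ → Matrix (Fin (W + 1)) (Fin d') ℝ)
      (QQ : Fin HQ → Matrix (Fin n') (Fin k) ℝ) (RQ : Matrix (Fin (W + 1)) (Fin k) ℝ)
      (WV : Matrix (Fin dV) (Fin (W + 1)) ℝ),
      ∀ ZK ZQ, crossAttention (1 : Matrix (Fin (W + 1)) (Fin (W + 1)) ℝ) 1 WV 1
          (sumLinear PK QK RK ZK) (sumLinear PQ QQ RQ ZQ) =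
        V * softmax (of fun w c => lam * (vec ZK ⬝ᵥ vec ZK + vec ZQ ⬝ᵥ vec ZQ) -
          lam * (pairSqDist (ZK, ZQ) (ctr w) + if col w = c then 0 else b)) := by
  obtain ⟨HK, PK, QK, RK, HQ, PQ, QQ, RQ, WV, h⟩ :=
    exists_crossAttention_sumLinear_eq_mul_softmax
      (fun w => (2 * lam) • (ctr w).1) (fun w => -(lam * (vec (ctr w).1 ⬝ᵥ vec (ctr w).1)))
      (fun w _ => (2 * lam) • (ctr w).2)
      (fun w c => -(lam * (vec (ctr w).2 ⬝ᵥ vec (ctr w).2)) - lam * if col w = c then 0 else b) V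
  refine ⟨HK, PK, QK, RK, HQ, PQ, QQ, RQ, WV, fun ZK ZQ => ?_⟩
  rw [h]
  congr 2
  ext w c
  simp only [of_apply, pairSqDist, sqDist_eq, vec_smul, smul_dotProduct, smul_eq_mul]
  ring

end PairSqDist

section SupNorm

attribute [local instance] Matrix.normedAddCommGroup

variable {m n m' n' : Type*} [Fintype m] [Fintype n] [Fintype m'] [Fintype n']

theorem Matrix.dist_lt_of_sqDist_lt {δ : ℝ} (hδ : 0 < δ) {X Y : Matrix m n ℝ}
    (h : sqDist X Y < δ ^ 2) : dist X Y < δ := by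
  rw [dist_eq_norm, norm_lt_iff hδ]
  exact fun i j => abs_lt_of_sq_lt_sq ((sq_sub_apply_le_sqDist X Y i j).trans_lt h) hδ.le

theorem IsCompact.exists_pos_forall_pairSqDist_lt_imp {p q : Type*} [Fintype p] [Fintype q]
    {S : Set (Matrix m n ℝ × Matrix m' n' ℝ)} (hS : IsCompact S)
    {g : Matrix m n ℝ × Matrix m' n' ℝ → Matrix p q ℝ} (hg : ContinuousOn g S)
    {ε : ℝ} (hε : 0 < ε) :
    ∃ b > 0, ∀ x ∈ S, ∀ y ∈ S, pairSqDist x y < b → ∀ i j, |g x i j - g y i j| < ε := by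
  obtain ⟨δ, hδ, hg'⟩ :=
    Metric.uniformContinuousOn_iff.1 (hS.uniformContinuousOn_of_continuous hg) ε hε
  refine ⟨δ ^ 2, by positivity, fun x hx y hy hxy i j => ?_⟩
  have hxy' : dist x y < δ := by
    rw [Prod.dist_eq, max_lt_iff]
    have := sqDist_nonneg x.1 y.1
    have := sqDist_nonneg x.2 y.2
    unfold pairSqDist at hxy
    refine ⟨dist_lt_of_sqDist_lt hδ ?_, dist_lt_of_sqDist_lt hδ ?_⟩ <;> linarith
  have := hg' x hx y hy hxy'
  rw [dist_eq_norm] at this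
  exact (norm_entry_le_entrywise_sup_norm (g x - g y)).trans_lt this

theorem IsCompact.exists_forall_abs_apply_le {α p q : Type*} [TopologicalSpace α] [Fintype p]
    [Fintype q] {S : Set α} (hS : IsCompact S) {g : α → Matrix p q ℝ} (hg : ContinuousOn g S) :
    ∃ B, ∀ x ∈ S, ∀ i j, |g x i j| ≤ B := by
  obtain ⟨B, hB⟩ := hS.exists_bound_of_continuousOn hg
  exact ⟨B, fun x hx i j => (norm_entry_le_entrywise_sup_norm (g x)).trans (hB x hx)⟩

end SupNorm

theorem IsCompact.exists_fin_cover_of_mem_nhds {X : Type*} [TopologicalSpace X] {S : Set X}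
    (hS : IsCompact S) (U : X → Set X) (hU : ∀ x ∈ S, U x ∈ 𝓝 x) :
    ∃ (N : ℕ) (z : Fin N → X), (∀ i, z i ∈ S) ∧ S ⊆ ⋃ i, U (z i) := by
  obtain ⟨t, htS, hcover⟩ := hS.elim_nhds_subcover U hU
  refine ⟨t.card, fun i => t.equivFin.symm i, fun i => htS _ (t.equivFin.symm i).2,
    hcover.trans (Set.iUnion₂_subset fun y hy => ?_)⟩
  exact Set.subset_iUnion_of_subset (t.equivFin ⟨y, hy⟩) (by simp)

theorem exists_pos_mul_exp_neg_mul_le (C : ℝ) {κ η : ℝ} (hκ : 0 < κ) (hη : 0 < η) :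
    ∃ lam > 0, C * exp (-(lam * κ)) ≤ η := by
  have h : Tendsto (fun lam => C * exp (-(lam * κ))) atTop (𝓝 0) := by
    simpa using (tendsto_exp_neg_atTop_nhds_zero.comp (tendsto_id.atTop_mul_const hκ)).const_mul C
  exact ((h.eventually (ge_mem_nhds hη)).and (eventually_gt_atTop 0)).exists.imp
    fun lam h => ⟨h.2, h.1⟩

theorem crossattention_universal_approximation_Linf_general
    (d n : ℕ)
    (UK UQ : Set (Matrix (Fin d) (Fin n) ℝ)) (hUK : IsCompact UK) (hUQ : IsCompact UQ)
    (f : Matrix (Fin d) (Fin n) ℝ → Matrix (Fin d) (Fin n) ℝ → Matrix (Fin d) (Fin n) ℝ)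
    (hf : ContinuousOn (fun p : Matrix (Fin d) (Fin n) ℝ × Matrix (Fin d) (Fin n) ℝ =>
      f p.1 p.2) (UK ×ˢ UQ))
    (ε : ℝ) (hε : 0 < ε) :
    ∃ (M₁ M₂ M₁' M₂' : ℕ)
      (HK : ℕ) (PK : Fin HK → Matrix (Fin M₁) (Fin d) ℝ)
      (QK : Fin HK → Matrix (Fin n) (Fin M₂) ℝ)
      (RbK : Matrix (Fin M₁) (Fin M₂) ℝ)
      (HQ : ℕ) (PQ : Fin HQ → Matrix (Fin M₁') (Fin d) ℝ)
      (QQ : Fin HQ → Matrix (Fin n) (Fin M₂') ℝ)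
      (RbQ : Matrix (Fin M₁') (Fin M₂') ℝ)
      (dA : ℕ) (WK : Matrix (Fin dA) (Fin M₁) ℝ) (WQ : Matrix (Fin dA) (Fin M₁') ℝ)
      (WV : Matrix (Fin d) (Fin M₁) ℝ)
      (WO : Matrix (Fin M₂') (Fin n) ℝ),
      ∀ ZK ∈ UK, ∀ ZQ ∈ UQ, ∀ (r : Fin d) (c : Fin n),
        |(WV * (∑ i, PK i * ZK * QK i + RbK) *
            softmax ((WK * (∑ i, PK i * ZK * QK i + RbK))ᵀ *
              (WQ * (∑ i, PQ i * ZQ * QQ i + RbQ))) * WO) r c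
          - f ZK ZQ r c| ≤ ε := by
  have hS : IsCompact (UK ×ˢ UQ) := hUK.prod hUQ
  obtain ⟨b, hb, hclose⟩ := hS.exists_pos_forall_pairSqDist_lt_imp hf (half_pos hε)
  obtain ⟨N, z, hzS, hcover⟩ := hS.exists_fin_cover_of_mem_nhds _
    fun y _ => setOf_pairSqDist_lt_mem_nhds y (half_pos hb)
  obtain ⟨B, hB⟩ := hS.exists_forall_abs_apply_le hf
  obtain ⟨lam, hlam, hsmall⟩ :=
    exists_pos_mul_exp_neg_mul_le ((N * n : ℕ) * (B + B)) (half_pos hb) (half_pos hε)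
  let e : Fin N × Fin n ≃ Fin (N * n) := finProdFinEquiv
  obtain ⟨HK, PK, QK, RK, HQ, PQ, QQ, RQ, WV, hattn⟩ :=
    exists_crossAttention_sumLinear_eq_mul_softmax_penalty (fun w => z (e.symm w).1)
      (fun w => (e.symm w).2) (of fun r w => f (z (e.symm w).1).1 (z (e.symm w).1).2 r (e.symm w).2)
      lam b
  simp only [crossAttention, sumLinear] at hattn
  refine ⟨_, _, _, _, HK, PK, QK, RK, HQ, PQ, QQ, RQ, N * n + 1, 1, 1, WV, 1,
    fun ZK hZK ZQ hZQ r c => ?_⟩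
  have hZ : (ZK, ZQ) ∈ UK ×ˢ UQ := Set.mk_mem_prod hZK hZQ
  obtain ⟨p₀, hp₀⟩ := Set.mem_iUnion.1 (hcover hZ)
  rw [hattn]
  simp only [mul_apply, softmax, of_apply]
  refine (abs_sum_mul_softmax_penalty_sub_le pairSqDist pairSqDist_nonneg
    (fun x γ => f x.1 x.2 r γ) _ _ hlam (half_pos hε).le (B := B + B) (w₀ := e (p₀, c))
    (by simp) (by simpa using hp₀.le) (fun w hw => ?_) (fun w => ?_)).trans ?_
  · exact (abs_sub_comm _ _).trans_le (hclose _ hZ _ (hzS _) hw r c).le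
  · exact (abs_sub _ _).trans (add_le_add (hB _ (hzS _) r _) (hB _ hZ r c))
  · rw [Fintype.card_fin]
    push_cast at hsmall ⊢
    linarith

/-- **`L∞`-norm universal approximation by single-layer, single-head cross-attention.**
For compact `U_K, U_Q ⊂ ℝ^{d×n}`, continuous `f : U_K × U_Q → ℝ^{d×n}`, and `ε > 0`,
there exist two sum-of-linear-transformations layers `Linear_K, Linear_Q` and a
single-head cross-attention layer with weights `W_K, W_Q, W_V, W_O` such that for all
`Z_K ∈ U_K`, `Z_Q ∈ U_Q`,
`‖W_V·Linear_K(Z_K)·Softmax((W_K·Linear_K(Z_K))ᵀ·(W_Q·Linear_Q(Z_Q)))·W_O − f(Z_K,Z_Q)‖_∞ ≤ ε`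
(maximum absolute entry). -/
theorem crossattention_universal_approximation_Linf
    (d n : ℕ) (hd : 0 < d) (hn : 0 < n)
    (UK UQ : Set (Matrix (Fin d) (Fin n) ℝ)) (hUK : IsCompact UK) (hUQ : IsCompact UQ)
    (f : Matrix (Fin d) (Fin n) ℝ → Matrix (Fin d) (Fin n) ℝ → Matrix (Fin d) (Fin n) ℝ)
    (hf : ContinuousOn (fun p : Matrix (Fin d) (Fin n) ℝ × Matrix (Fin d) (Fin n) ℝ =>
      f p.1 p.2) (UK ×ˢ UQ))
    (ε : ℝ) (hε : 0 < ε) :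
    ∃ (M₁ M₂ M₁' M₂' : ℕ)
      (HK : ℕ) (PK : Fin HK → Matrix (Fin M₁) (Fin d) ℝ)
      (QK : Fin HK → Matrix (Fin n) (Fin M₂) ℝ)
      (RbK : Matrix (Fin M₁) (Fin M₂) ℝ)
      (HQ : ℕ) (PQ : Fin HQ → Matrix (Fin M₁') (Fin d) ℝ)
      (QQ : Fin HQ → Matrix (Fin n) (Fin M₂') ℝ)
      (RbQ : Matrix (Fin M₁') (Fin M₂') ℝ)
      (dA : ℕ) (WK : Matrix (Fin dA) (Fin M₁) ℝ) (WQ : Matrix (Fin dA) (Fin M₁') ℝ)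
      (WV : Matrix (Fin d) (Fin M₁) ℝ)
      (WO : Matrix (Fin M₂') (Fin n) ℝ),
      ∀ ZK ∈ UK, ∀ ZQ ∈ UQ, ∀ (r : Fin d) (c : Fin n),
        |(WV * (∑ i, PK i * ZK * QK i + RbK) *
            softmax ((WK * (∑ i, PK i * ZK * QK i + RbK))ᵀ *
              (WQ * (∑ i, PQ i * ZQ * QQ i + RbQ))) * WO) r c
          - f ZK ZQ r c| ≤ ε :=
  crossattention_universal_approximation_Linf_general d n UK UQ hUK hUQ f hf ε hε
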